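/- Let f(x) = H(1/4 − |x|²) be the characteristic function of the disc of radius 1/2 in ℝ², and let R F(r) = ∫₀^π F(1 + r² + 2r cos θ) dθ denote the (half-)circular transform of a radial function F(|x|²) evaluated at the center (1,0) on the unit circle. Then for r = 1/2 + h with 0 < h small, Rf(1/2 + h) = arccos( ((1/2+h)² + 3/4) / (1 + 2h) ), and this function has the asymptotic expansion √2·h^{1/2} − (17√2/12)·h^{3/2} + (243√2/160)·h^{5/2} + O(h^{7/2}) as h → 0⁺. -/

import Mathlib

/-!
Substituting `θ ↦ π − θ`, the integrand becomes the indicator of `{θ ∈ [0, π] | c ≤ cos θ}`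
with `c = (r² + 3/4) / (2r)`, an interval of length `arccos c`. For `r = 1/2 + h` one has
`1 − c = 2x²` with `x = √(h/2) · √((1 − h)/(1 + 2h))`, so `Rf(1/2 + h) = 2 arcsin x`. The
expansion then combines the degree-5 Taylor polynomial of `arcsin` (remainder bounded by the
mean value theorem, since `(1 − s)^(-1/2)` is within `s³` of its quadratic Taylor polynomial)
with the quadratic Taylor polynomial of `√((1 − h)/(1 + 2h))` (remainder bounded by squaring).
-/

open MeasureTheory Real intervalIntegral Asymptotics Filter Topology

/-- Half-circular transform (at center `(1,0)` on the unit circle) of the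
radial function `x ↦ H(1/4 − |x|²)`, the indicator of the disc of radius `1/2`. -/
noncomputable def Rdisc (r : ℝ) : ℝ :=
  ∫ θ in (0:ℝ)..π, (if 1 + r ^ 2 + 2 * r * Real.cos θ ≤ 1/4 then (1:ℝ) else 0)

open Set

theorem le_cos_iff_le_arccos {s θ : ℝ} (hs : s ≤ 1) (hθ : θ ∈ Icc 0 π) :
    s ≤ cos θ ↔ θ ≤ arccos s := by
  refine ⟨fun h => arccos_cos hθ.1 hθ.2 ▸ arccos_le_arccos h, fun h => ?_⟩
  rcases le_or_gt s (-1) with hs' | hs'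
  · exact hs'.trans (neg_one_le_cos θ)
  · simpa [cos_arccos hs'.le hs] using cos_le_cos_of_nonneg_of_le_pi hθ.1 (arccos_le_pi s) h

theorem integral_ite_le_cos (s : ℝ) :
    ∫ θ in (0:ℝ)..π, (if s ≤ cos θ then (1:ℝ) else 0) = arccos s := by
  rcases le_or_gt s 1 with hs | hs
  · have hmem : arccos s ∈ Icc 0 π := ⟨arccos_nonneg s, arccos_le_pi s⟩
    calc ∫ θ in (0:ℝ)..π, (if s ≤ cos θ then (1:ℝ) else 0)
        = ∫ θ in (0:ℝ)..π, {θ | θ ≤ arccos s}.indicator (fun _ => (1:ℝ)) θ := by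
          refine integral_congr fun θ hθ => ?_
          rw [uIcc_of_le pi_pos.le] at hθ
          simp only [indicator_apply, mem_ofPred_eq, le_cos_iff_le_arccos hs hθ]
      _ = arccos s := by simp [integral_indicator hmem]
  · have hzero : ∀ θ, ¬ s ≤ cos θ := fun θ h => (h.trans (cos_le_one θ)).not_gt hs
    simp [hzero, arccos_eq_zero.2 hs.le]

theorem Rdisc_eq_arccos {r : ℝ} (hr : 0 < r) :
    Rdisc r = arccos ((r ^ 2 + 3/4) / (2 * r)) := by
  have hflip := integral_comp_sub_left (a := 0) (b := π)
    (fun θ => if (r ^ 2 + 3/4) / (2 * r) ≤ cos θ then (1:ℝ) else 0) π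
  simp only [sub_zero, sub_self, cos_pi_sub] at hflip
  rw [← integral_ite_le_cos, Rdisc, ← hflip]
  refine integral_congr fun θ _ => if_congr ?_ rfl rfl
  rw [div_le_iff₀ (by positivity : (0:ℝ) < 2 * r)]
  constructor <;> intro h <;> linarith

theorem arccos_one_sub_two_mul_sq {x : ℝ} (hx₀ : 0 ≤ x) (hx₁ : x ≤ 1) :
    arccos (1 - 2 * x ^ 2) = 2 * arcsin x := by
  have hcos : cos (2 * arcsin x) = 1 - 2 * x ^ 2 := by
    rw [cos_two_mul, cos_arcsin, sq_sqrt (by nlinarith)]; ring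
  rw [← hcos, arccos_cos (by linarith [arcsin_nonneg.2 hx₀])
    (by linarith [arcsin_le_pi_div_two x, pi_pos])]

theorem abs_sub_le_of_sq_mul_eq {y d n a e : ℝ} (hy : 0 ≤ y) (hd : 0 < d) (hyd : y ^ 2 * d = n)
    (he : 0 ≤ e) (hae : 0 ≤ a - e) (hlo : (a - e) ^ 2 * d ≤ n) (hhi : n ≤ (a + e) ^ 2 * d) :
    |y - a| ≤ e := by
  have hlo' : (a - e) ^ 2 ≤ y ^ 2 := le_of_mul_le_mul_right (hyd ▸ hlo) hd
  have hhi' : y ^ 2 ≤ (a + e) ^ 2 := le_of_mul_le_mul_right (hyd ▸ hhi) hd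
  rw [abs_sub_le_iff]
  constructor
  · linarith [(sq_le_sq₀ hy (by linarith)).1 hhi']
  · linarith [(sq_le_sq₀ hae hy).1 hlo']

theorem abs_one_div_sqrt_one_sub_sub_le {s : ℝ} (hs₀ : 0 ≤ s) (hs₁ : s ≤ 1/4) :
    |1 / √(1 - s) - (1 + s/2 + 3*s^2/8)| ≤ s^3 := by
  have hd : 0 < 1 - s := by linarith
  refine abs_sub_le_of_sq_mul_eq (n := 1) (by positivity) hd ?_ (by positivity) (by nlinarith)
    ?_ ?_
  · rw [div_pow, sq_sqrt hd.le, one_pow, div_mul_cancel₀ _ hd.ne']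
  · nlinarith [pow_nonneg hs₀ 3, pow_nonneg hs₀ 4, pow_nonneg hs₀ 5, pow_nonneg hs₀ 6,
      pow_nonneg hs₀ 7]
  · nlinarith [pow_nonneg hs₀ 3, pow_nonneg hs₀ 4, pow_nonneg hs₀ 5, pow_nonneg hs₀ 6,
      pow_nonneg hs₀ 7]

theorem abs_arcsin_sub_taylor_le {x : ℝ} (hx : |x| ≤ 1/2) :
    |arcsin x - (x + x^3/6 + 3*x^5/40)| ≤ |x| ^ 7 := by
  set F : ℝ → ℝ := fun t => arcsin t - (t + t^3/6 + 3*t^5/40)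
  have hF : ∀ t ∈ uIcc 0 x,
      HasDerivWithinAt F (1 / √(1 - t^2) - (1 + t^2/2 + 3*(t^2)^2/8)) (uIcc 0 x) t := by
    intro t ht
    have htx : |t| ≤ 1/2 := by
      have := abs_sub_left_of_mem_uIcc ht
      simp only [sub_zero] at this
      linarith
    have hpoly : HasDerivAt (fun t : ℝ => t + t^3/6 + 3*t^5/40) (1 + t^2/2 + 3*(t^2)^2/8) t :=
      (((hasDerivAt_id t).add ((hasDerivAt_pow 3 t).div_const 6)).add
        (((hasDerivAt_pow 5 t).const_mul 3).div_const 40)).congr_deriv (by norm_num; ring)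
    exact ((hasDerivAt_arcsin (by linarith [neg_abs_le t]) (by linarith [le_abs_self t])).sub
      hpoly).hasDerivWithinAt
  have hF' : ∀ t ∈ uIcc 0 x, ‖1 / √(1 - t^2) - (1 + t^2/2 + 3*(t^2)^2/8)‖ ≤ |x| ^ 6 := by
    intro t ht
    have htx : |t| ≤ |x| := by simpa using abs_sub_left_of_mem_uIcc ht
    calc _ ≤ (t^2)^3 :=
          abs_one_div_sqrt_one_sub_sub_le (sq_nonneg t) (by nlinarith [sq_abs t, abs_nonneg t])
      _ = |t| ^ 6 := by rw [← sq_abs t]; ring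
      _ ≤ |x| ^ 6 := by gcongr
  have := (convex_uIcc 0 x).norm_image_sub_le_of_norm_hasDerivWithin_le hF hF'
    left_mem_uIcc right_mem_uIcc
  simpa [F, ← pow_succ] using this

theorem abs_sub_taylor_le_of_sq_mul_eq {h y : ℝ} (h0 : 0 ≤ h) (h1 : h ≤ 1/8) (hy : 0 ≤ y)
    (hy2 : y ^ 2 * (1 + 2*h) = 1 - h) :
    |y - (1 - 3*h/2 + 15*h^2/8)| ≤ 4*h^3 :=
  abs_sub_le_of_sq_mul_eq hy (by linarith) hy2 (by positivity) (by nlinarith)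
    (by nlinarith [pow_nonneg h0 3, pow_nonneg h0 4, pow_nonneg h0 5, pow_nonneg h0 6,
      pow_nonneg h0 7])
    (by nlinarith [pow_nonneg h0 3, pow_nonneg h0 4, pow_nonneg h0 5, pow_nonneg h0 6,
      pow_nonneg h0 7])

theorem abs_mul_taylor_sub_le {h y : ℝ} (h0 : 0 ≤ h) (h1 : h ≤ 1/8) (hy : 0 ≤ y)
    (hy2 : y ^ 2 * (1 + 2*h) = 1 - h) :
    |y * (1 + h*y^2/12 + 3*h^2*y^4/160) - (1 - 17*h/12 + 243*h^2/160)| ≤ 9*h^3 := by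
  set a := 1 - 3*h/2 + 15*h^2/8
  set m := 1 + h*y^2/12 + 3*h^2*y^4/160
  have hd : 0 < 1 + 2*h := by linarith
  have hq : y ^ 2 = (1 - h) / (1 + 2*h) := eq_div_of_mul_eq hd.ne' hy2
  have hy1 : y ^ 2 ≤ 1 := by nlinarith
  have hm0 : 0 ≤ m := by positivity
  have hm2 : m ≤ 2 := by
    have hy4 : y ^ 4 ≤ 1 := by nlinarith
    simp only [m]
    nlinarith [mul_le_mul_of_nonneg_left hy1 h0, mul_le_mul_of_nonneg_left hy4 (sq_nonneg h)]
  have htrunc : |a * m - (1 - 17*h/12 + 243*h^2/160)| ≤ h^3 := by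
    have hremainder : a * m - (1 - 17*h/12 + 243*h^2/160)
        = h^3 * (855/2 + 7455/8*h - 789/4*h^2 + 135/8*h^3) / (480 * (1 + 2*h)^2) := by
      simp only [a, m, show y ^ 4 = (y ^ 2) ^ 2 by ring, hq]
      field_simp
      ring
    rw [hremainder, abs_div, abs_of_nonneg (by positivity : (0:ℝ) ≤ 480 * (1 + 2*h)^2),
      div_le_iff₀ (by positivity), abs_of_nonneg (mul_nonneg (pow_nonneg h0 3) (by nlinarith))]
    nlinarith [pow_nonneg h0 3, pow_nonneg h0 4, pow_nonneg h0 5, pow_nonneg h0 6]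
  calc |y * m - (1 - 17*h/12 + 243*h^2/160)|
      = |(y - a) * m + (a * m - (1 - 17*h/12 + 243*h^2/160))| := by ring_nf
    _ ≤ |y - a| * m + h^3 := by
      grw [abs_add_le, abs_mul, abs_of_nonneg hm0, htrunc]
    _ ≤ 4*h^3 * 2 + h^3 := by
      grw [abs_sub_taylor_le_of_sq_mul_eq h0 h1 hy hy2, hm2]
    _ = 9*h^3 := by ring

theorem abs_two_mul_arcsin_sub_le {h u y : ℝ} (h0 : 0 ≤ h) (h1 : h ≤ 1/8) (hu : 0 ≤ u)
    (hu2 : u ^ 2 = h / 2) (hy : 0 ≤ y) (hy2 : y ^ 2 * (1 + 2*h) = 1 - h) :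
    |2 * arcsin (u * y) - 2 * u * (1 - 17*h/12 + 243*h^2/160)| ≤ 146 * u ^ 7 := by
  have hy1 : y ≤ 1 := by nlinarith
  have hxu : |u * y| ≤ u := by
    rw [abs_of_nonneg (by positivity)]; exact mul_le_of_le_one_right hu hy1
  have hu4 : u ≤ 1/4 := by nlinarith
  have harcsin := abs_arcsin_sub_taylor_le (hxu.trans (by linarith))
  have hmul := abs_mul_taylor_sub_le h0 h1 hy hy2
  have hsplit : 2 * arcsin (u * y) - 2 * u * (1 - 17*h/12 + 243*h^2/160)
      = 2 * (arcsin (u * y) - (u * y + (u * y)^3/6 + 3*(u * y)^5/40))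
        + 2 * u * (y * (1 + h*y^2/12 + 3*h^2*y^4/160) - (1 - 17*h/12 + 243*h^2/160)) := by
    linear_combination (u * y ^ 3 / 3 + 3 / 20 * u * y ^ 5 * (u ^ 2 + h / 2)) * hu2
  calc _ ≤ 2 * |u * y| ^ 7 + 2 * u * (9 * h^3) := by
        rw [hsplit]
        grw [abs_add_le, abs_mul, abs_mul, harcsin, hmul, abs_two,
          abs_of_nonneg (by positivity : 0 ≤ 2 * u)]
    _ ≤ 2 * u ^ 7 + 2 * u * (9 * (2 * u^2)^3) := by
        grw [hxu, show h = 2 * u ^ 2 by linarith]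
    _ = 146 * u ^ 7 := by ring

theorem Rdisc_half_add_eq_two_mul_arcsin {h : ℝ} (h0 : 0 ≤ h) (h1 : h ≤ 1) :
    Rdisc (1/2 + h) = 2 * arcsin (√(h/2) * √((1 - h) / (1 + 2*h))) := by
  have hq : 0 ≤ (1 - h) / (1 + 2*h) := div_nonneg (by linarith) (by linarith)
  have hx2 : h / 2 * ((1 - h) / (1 + 2*h)) ≤ 1 := by
    rw [← mul_div_assoc, div_le_one (by linarith)]; nlinarith
  rw [← sqrt_mul (by linarith), Rdisc_eq_arccos (by linarith),
    ← arccos_one_sub_two_mul_sq (sqrt_nonneg _) (sqrt_le_one.2 hx2), sq_sqrt (by positivity)]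
  congr 1
  field_simp
  ring

theorem abs_Rdisc_half_add_sub_le {h : ℝ} (h0 : 0 ≤ h) (h1 : h ≤ 1/8) :
    |Rdisc (1/2 + h) - √2 * √h * (1 - 17*h/12 + 243*h^2/160)| ≤ 146 * √h ^ 7 := by
  have hu : √2 * √h = 2 * √(h/2) :=
    (sq_eq_sq₀ (by positivity) (by positivity)).1 (by
      rw [mul_pow, mul_pow, sq_sqrt zero_le_two, sq_sqrt h0, sq_sqrt (by linarith)]; ring)
  rw [Rdisc_half_add_eq_two_mul_arcsin h0 (by linarith), hu]
  calc _ ≤ 146 * √(h/2) ^ 7 :=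
        abs_two_mul_arcsin_sub_le h0 h1 (sqrt_nonneg _) (sq_sqrt (by linarith)) (sqrt_nonneg _)
          (by rw [sq_sqrt (div_nonneg (by linarith) (by linarith)),
            div_mul_cancel₀ _ (by linarith)])
    _ ≤ 146 * √h ^ 7 := by grw [sqrt_le_sqrt (show h/2 ≤ h by linarith)]

/-- For `r = 1/2 + h`, `Rf(1/2+h) = arccos(((1/2+h)² + 3/4)/(1+2h))`, and this has the
expansion `√2 h^{1/2} − (17√2/12) h^{3/2} + (243√2/160) h^{5/2} + O(h^{7/2})` as `h → 0⁺`. -/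
theorem Rdisc_arccos_and_expansion :
    (∀ h : ℝ, 0 < h → h < 1/4 →
      Rdisc (1/2 + h) = Real.arccos (((1/2 + h) ^ 2 + 3/4) / (1 + 2 * h))) ∧
    (fun h : ℝ => Rdisc (1/2 + h) -
        (Real.sqrt 2 * h ^ ((1:ℝ)/2) - (17 * Real.sqrt 2 / 12) * h ^ ((3:ℝ)/2)
          + (243 * Real.sqrt 2 / 160) * h ^ ((5:ℝ)/2)))
      =O[𝓝[>] (0:ℝ)] (fun h : ℝ => h ^ ((7:ℝ)/2)) := by
  refine ⟨fun h h0 _ => ?_, ?_⟩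
  · rw [Rdisc_eq_arccos (by linarith), mul_add, mul_one_div_cancel two_ne_zero]
  · refine IsBigO.of_bound 146 ?_
    filter_upwards [Ioo_mem_nhdsGT (by norm_num : (0:ℝ) < 1/8)] with h ⟨h0, h1⟩
    have hsq : √h ^ 2 = h := sq_sqrt h0.le
    have hexpansion : √2 * h ^ ((1:ℝ)/2) - (17 * √2 / 12) * h ^ ((3:ℝ)/2)
        + (243 * √2 / 160) * h ^ ((5:ℝ)/2) = √2 * √h * (1 - 17*h/12 + 243*h^2/160) := by
      norm_num [rpow_div_two_eq_sqrt _ h0.le]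
      linear_combination (√2 * √h * (-17/12 + 243/160 * (√h^2 + h))) * hsq
    rw [hexpansion, Real.norm_eq_abs, norm_of_nonneg (by positivity),
      rpow_div_two_eq_sqrt _ h0.le]
    norm_num
    exact abs_Rdisc_half_add_sub_le h0.le h1.le
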